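/- Let Σ = {u = 0} be a regular surface in the Heisenberg group and γ : [a,b] → Σ a Euclidean C²-smooth regular curve through non-characteristic points. If ω(γ̇(t)) ≠ 0, then the limit as L → +∞ of the geodesic curvature k^{L,∇¹}_{γ,Σ}(t) associated to the second Schouten–Van Kampen affine connection exists and equals |p̄(γ(t))γ̇₁(t)| / (2|ω(γ̇(t))|). -/

import Mathlib

/-!
As `L → ∞` the normalising factor `N = γ̇₁² + γ̇₂² + L ω²` grows linearly in `L`, and so does
`a¹ = (q̄γ̈₁ - p̄γ̈₂) + L · p̄ ω γ̇₁ / 2`, whereas `l_L → l` and `r̄_L ~ L^{-1/2} u_{x₃} / l` make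
`b¹` and `c₂` grow only like `√L`. Hence `a¹ / N → p̄ γ̇₁ / (2 ω)`, while `(b¹)² / N²` and
`(a¹c₁ + b¹c₂)² / N³` are `O(1/L)`; the curvature tends to `|p̄ γ̇₁ / (2 ω)|`.
-/

open Filter Real Topology

theorem tendsto_affine_div_affine {A₀ A₁ n₀ d : ℝ} (hd : d ≠ 0) :
    Tendsto (fun L => (A₀ + L * A₁) / (n₀ + L * d)) atTop (𝓝 (A₁ / d)) := by
  have h : Tendsto (fun L : ℝ => (A₀ * L⁻¹ + A₁) / (n₀ * L⁻¹ + d)) atTop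
      (𝓝 ((A₀ * 0 + A₁) / (n₀ * 0 + d))) :=
    ((tendsto_inv_atTop_zero.const_mul A₀).add_const A₁).div
      ((tendsto_inv_atTop_zero.const_mul n₀).add_const d) (by simpa using hd)
  simp only [mul_zero, zero_add] at h
  refine h.congr' ?_
  filter_upwards [eventually_gt_atTop 0] with L hL
  rw [← mul_div_mul_left _ _ hL.ne']
  congr 1 <;> field_simp

theorem tendsto_curvatureSq_of_sqrt_growth {A₀ A₁ n₀ d c β₀ γ₀ : ℝ} {b c₂ : ℝ → ℝ}
    (hd : d ≠ 0) (hb : Tendsto (fun L => b L / √L) atTop (𝓝 β₀))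
    (hc₂ : Tendsto (fun L => c₂ L / √L) atTop (𝓝 γ₀)) :
    Tendsto (fun L => ((A₀ + L * A₁) ^ 2 + b L ^ 2) / (n₀ + L * d) ^ 2
        - ((A₀ + L * A₁) * c + b L * c₂ L) ^ 2 / (n₀ + L * d) ^ 3) atTop (𝓝 ((A₁ / d) ^ 2)) := by
  have ha := tendsto_affine_div_affine (A₀ := A₀) (A₁ := A₁) (n₀ := n₀) hd
  have hL := tendsto_affine_div_affine (A₀ := 0) (A₁ := 1) (n₀ := n₀) hd
  have hinv := tendsto_affine_div_affine (A₀ := 1) (A₁ := 0) (n₀ := n₀) hd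
  -- with `N = n₀ + L d`, the expression is
  -- `(a/N)² + (b/√L)² (L/N) (1/N) - (c (a/N) + (b/√L) (c₂/√L) (L/N))² (1/N)`
  have h := ((ha.pow 2).add (((hb.pow 2).mul hL).mul hinv)).sub
    ((((ha.const_mul c).add ((hb.mul hc₂).mul hL)).pow 2).mul hinv)
  rw [zero_div, mul_zero, mul_zero, add_zero, sub_zero] at h
  refine h.congr' ?_
  filter_upwards [eventually_gt_atTop 0] with L hL
  obtain ⟨s, hs, rfl⟩ : ∃ s > 0, L = s ^ 2 := ⟨√L, sqrt_pos.2 hL, (sq_sqrt hL.le).symm⟩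
  rw [sqrt_sq hs.le]
  field_simp
  ring

theorem tendsto_sqrt_add_sq_div_sqrt (m U : ℝ) :
    Tendsto (fun L => √(m + (U / √L) ^ 2)) atTop (𝓝 √m) := by
  have h : Tendsto (fun L => U / √L) atTop (𝓝 0) :=
    tendsto_const_nhds.div_atTop tendsto_sqrt_atTop
  simpa using (tendsto_const_nhds.add (h.pow 2)).sqrt

theorem tendsto_affine_sub_div_sqrt {ρ θ : ℝ → ℝ} {ρ₀ : ℝ} (X V E : ℝ)
    (hρ : Tendsto (fun L => ρ L * √L) atTop (𝓝 ρ₀)) (hθ : Tendsto θ atTop (𝓝 1)) :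
    Tendsto (fun L => (ρ L * (X + L * V) - θ L * √L * E) / √L) atTop (𝓝 (ρ₀ * V - E)) := by
  have h := (((hρ.mul tendsto_inv_atTop_zero).mul_const X).add (hρ.mul_const V)).sub
    (hθ.mul_const E)
  simp only [mul_zero, zero_mul, zero_add, one_mul] at h
  refine h.congr' ?_
  filter_upwards [eventually_gt_atTop 0] with L hL
  obtain ⟨s, hs, rfl⟩ : ∃ s > 0, L = s ^ 2 := ⟨√L, sqrt_pos.2 hL, (sq_sqrt hL.le).symm⟩
  rw [sqrt_sq hs.le]
  field_simp

theorem geodesic_curvature_limit_second_SvK_nonhorizontal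
    (γ₁ γ₂ ω p q uz lf pbar qbar c1 : ℝ → ℝ)
    (rr lL rbar c2 aa bb k : ℝ → ℝ → ℝ)
    (a b t : ℝ) (ht : t ∈ Set.Icc a b)
    (hl : ∀ s, lf s = Real.sqrt (p s ^ 2 + q s ^ 2))
    (hnc : ∀ s ∈ Set.Icc a b, lf s ≠ 0)
    (hrr : ∀ L s, rr L s = uz s / Real.sqrt L)
    (hlL : ∀ L s, lL L s = Real.sqrt (p s ^ 2 + q s ^ 2 + rr L s ^ 2))
    (hrbar : ∀ L s, rbar L s = rr L s / lL L s)
    (hc2 : ∀ L s, c2 L s = rbar L s * (pbar s * deriv γ₁ s + qbar s * deriv γ₂ s)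
        - (lf s / lL L s) * Real.sqrt L * ω s)
    (haa : ∀ L s, aa L s = qbar s * deriv (deriv γ₁) s - pbar s * (deriv (deriv γ₂) s - L * ω s * deriv γ₁ s / 2))
    (hbb : ∀ L s, bb L s = rbar L s * pbar s * deriv (deriv γ₁) s + rbar L s * qbar s * (deriv (deriv γ₂) s - L * ω s * deriv γ₁ s / 2) - (lf s / lL L s) * Real.sqrt L * (deriv ω s + deriv γ₁ s * deriv γ₂ s / 2))
    (hk : ∀ L s, k L s = Real.sqrt ((aa L s ^ 2 + bb L s ^ 2) / ((deriv γ₁ s)^2 + (deriv γ₂ s)^2 + L * (ω s)^2)^2 - (aa L s * c1 s + bb L s * c2 L s)^2 / ((deriv γ₁ s)^2 + (deriv γ₂ s)^2 + L * (ω s)^2)^3))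
    (h0 : ω t ≠ 0) :
    Filter.Tendsto (fun L => k L t) Filter.atTop
      (nhds (|pbar t * deriv γ₁ t| / (2 * |ω t|))) := by
  have hlf : lf t ≠ 0 := hnc t ht
  have tendsto_lL : Tendsto (fun L => lL L t) atTop (𝓝 (lf t)) := by
    simpa only [hlL, hrr, hl] using tendsto_sqrt_add_sq_div_sqrt (p t ^ 2 + q t ^ 2) (uz t)
  have tendsto_ratio : Tendsto (fun L => lf t / lL L t) atTop (𝓝 1) := by
    have h := (tendsto_const_nhds (x := lf t)).div tendsto_lL hlf
    rwa [div_self hlf] at h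
  have tendsto_rbar : Tendsto (fun L => rbar L t * √L) atTop (𝓝 (uz t / lf t)) := by
    refine (tendsto_const_nhds.div tendsto_lL hlf).congr' ?_
    filter_upwards [eventually_gt_atTop 0] with L hL
    rw [Pi.div_apply, hrbar, hrr, div_right_comm, div_mul_cancel₀ _ (sqrt_pos.2 hL).ne']
  have tendsto_bb : Tendsto (fun L => bb L t / √L) atTop _ :=
    (tendsto_affine_sub_div_sqrt (pbar t * deriv (deriv γ₁) t + qbar t * deriv (deriv γ₂) t)
      (-(qbar t * ω t * deriv γ₁ t / 2)) (deriv ω t + deriv γ₁ t * deriv γ₂ t / 2)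
      tendsto_rbar tendsto_ratio).congr fun L => by rw [hbb]; ring
  have tendsto_c2 : Tendsto (fun L => c2 L t / √L) atTop _ :=
    (tendsto_affine_sub_div_sqrt (pbar t * deriv γ₁ t + qbar t * deriv γ₂ t) 0 (ω t)
      tendsto_rbar tendsto_ratio).congr fun L => by rw [hc2]; ring
  have haa_affine : ∀ L, aa L t = (qbar t * deriv (deriv γ₁) t - pbar t * deriv (deriv γ₂) t)
      + L * (pbar t * ω t * deriv γ₁ t / 2) := fun L => by rw [haa]; ring
  have h := (tendsto_curvatureSq_of_sqrt_growth
    (A₀ := qbar t * deriv (deriv γ₁) t - pbar t * deriv (deriv γ₂) t)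
    (A₁ := pbar t * ω t * deriv γ₁ t / 2) (n₀ := deriv γ₁ t ^ 2 + deriv γ₂ t ^ 2) (c := c1 t)
    (pow_ne_zero 2 h0) tendsto_bb tendsto_c2).sqrt
  simp only [← haa_affine, ← hk] at h
  convert h using 2
  simp only [sqrt_sq_eq_abs, abs_div, abs_mul, abs_pow, abs_two]
  field_simp
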